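/- arXiv:2510.03715 — 7 statements merged into one kernel-verified Lean document; each statement's English description precedes it below -/
import Mathlib

section
/- Let I ⊆ ℝ be a nonempty open interval, f : I → ℝ, n ∈ ℕ, and P = (p_{i,j}) an n×n doubly stochastic matrix. Suppose there exist disjoint nonempty subsets A, B ⊆ {1,…,n} such that the vector (1/|A|)∑_{α∈A} e_α − (1/|B|)∑_{β∈B} e_β belongs to the column span of P. If f((x₁+⋯+xₙ)/n) ≤ (1/n)∑_{i=1}^n f(p_{i,1}x₁+⋯+p_{i,n}xₙ) for all x₁,…,xₙ ∈ I, then f is Jensen convex on I, i.e., f((u+v)/2) ≤ (f(u)+f(v))/2 for all u, v ∈ I. -/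
open Finset

set_option maxHeartbeats 1000000

theorem stmt_0 (I : Set ℝ) (hne : I.Nonempty) (hop : IsOpen I) (hconv : Convex ℝ I)
    (f : ℝ → ℝ) (n : ℕ) (hn : 0 < n) (P : Matrix (Fin n) (Fin n) ℝ)
    (hPnn : ∀ i j, 0 ≤ P i j)
    (hrow : ∀ i, ∑ j, P i j = 1) (hcol : ∀ j, ∑ i, P i j = 1)
    (A B : Finset (Fin n)) (hA : A.Nonempty) (hB : B.Nonempty) (hAB : Disjoint A B)
    (hspan : ∃ c : Fin n → ℝ, P.mulVec c = fun i =>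
      (if i ∈ A then (1 : ℝ) / A.card else 0) - (if i ∈ B then (1 : ℝ) / B.card else 0))
    (hineq : ∀ x : Fin n → ℝ, (∀ i, x i ∈ I) →
      f ((∑ i, x i) / n) ≤ (1 / n) * ∑ i, f (∑ j, P i j * x j)) :
    ∀ u ∈ I, ∀ v ∈ I, f ((u + v) / 2) ≤ (f u + f v) / 2 := by
  obtain ⟨c, hc⟩ := hspan
  have hn0 : (0:ℝ) < n := by exact_mod_cast hn
  set a : ℝ := (A.card : ℝ) with ha_def
  set b : ℝ := (B.card : ℝ) with hb_def
  have ha1 : (1:ℝ) ≤ a := by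
    have h1 : 1 ≤ A.card := Finset.card_pos.mpr hA
    rw [ha_def]; exact_mod_cast h1
  have hb1 : (1:ℝ) ≤ b := by
    have h1 : 1 ≤ B.card := Finset.card_pos.mpr hB
    rw [hb_def]; exact_mod_cast h1
  have ha0 : (0:ℝ) < a := lt_of_lt_of_le one_pos ha1
  have hb0 : (0:ℝ) < b := lt_of_lt_of_le one_pos hb1
  have hab : (0:ℝ) < a + b := by linarith
  -- sum of c is zero
  have hsumc : ∑ j, c j = 0 := by
    have h1 : ∑ i, P.mulVec c i = ∑ j, c j := by
      simp only [Matrix.mulVec, dotProduct]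
      rw [Finset.sum_comm]
      have : ∀ j, ∑ i, P i j * c j = c j := by
        intro j
        rw [← Finset.sum_mul, hcol, one_mul]
      exact Finset.sum_congr rfl fun j _ => this j
    have h2 : ∑ i, P.mulVec c i = 0 := by
      simp only [hc]
      rw [Finset.sum_sub_distrib, Finset.sum_ite_mem, Finset.sum_ite_mem,
        Finset.univ_inter, Finset.univ_inter, Finset.sum_const, Finset.sum_const,
        nsmul_eq_mul, nsmul_eq_mul]
      rw [← ha_def, ← hb_def]
      field_simp
      ring
    rw [h1] at h2
    exact h2
  -- core two-point inequality
  have core : ∀ m τ : ℝ, (∀ i, m + τ * c i ∈ I) →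
      (a + b) * f m ≤ a * f (m + τ / a) + b * f (m - τ / b) := by
    intro m τ hmem
    have h : f ((∑ i, (m + τ * c i)) / (n:ℝ)) ≤
        (1/(n:ℝ)) * ∑ i, f (∑ j, P i j * (m + τ * c j)) :=
      hineq (fun j => m + τ * c j) hmem
    have hmean : (∑ i, (m + τ * c i)) / (n:ℝ) = m := by
      rw [Finset.sum_add_distrib, Finset.sum_const, ← Finset.mul_sum, hsumc, mul_zero,
        add_zero, Finset.card_univ, Fintype.card_fin, nsmul_eq_mul]
      field_simp
    rw [hmean] at h
    have hR : ∀ i : Fin n, f (∑ j, P i j * (m + τ * c j)) =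
        f m + (if i ∈ A then f (m + τ/a) - f m else 0)
             + (if i ∈ B then f (m - τ/b) - f m else 0) := by
      intro i
      have hinner : (∑ j, P i j * (m + τ * c j)) = m + τ * (P.mulVec c i) := by
        simp only [mul_add]
        rw [Finset.sum_add_distrib, ← Finset.sum_mul, hrow i, one_mul]
        congr 1
        rw [Matrix.mulVec, dotProduct, Finset.mul_sum]
        exact Finset.sum_congr rfl fun j _ => by ring
      have hci : P.mulVec c i =
          (if i ∈ A then (1 : ℝ) / a else 0) - (if i ∈ B then (1 : ℝ) / b else 0) :=
        congrFun hc i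
      rw [hinner, hci]
      by_cases hiA : i ∈ A
      · have hiB : i ∉ B := Finset.disjoint_left.mp hAB hiA
        rw [if_pos hiA, if_neg hiB, if_pos hiA, if_neg hiB,
          show m + τ * ((1:ℝ)/a - 0) = m + τ/a by ring]
        ring
      · by_cases hiB : i ∈ B
        · rw [if_neg hiA, if_pos hiB, if_neg hiA, if_pos hiB,
            show m + τ * ((0:ℝ) - 1/b) = m - τ/b by ring]
          ring
        · rw [if_neg hiA, if_neg hiB, if_neg hiA, if_neg hiB,
            show m + τ * ((0:ℝ) - 0) = m by ring]
          ring
    have hsum : (∑ i, f (∑ j, P i j * (m + τ * c j)))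
        = n * f m + a * (f (m + τ/a) - f m) + b * (f (m - τ/b) - f m) := by
      rw [Finset.sum_congr rfl fun i _ => hR i]
      rw [Finset.sum_add_distrib, Finset.sum_add_distrib, Finset.sum_const,
        Finset.sum_ite_mem, Finset.sum_ite_mem, Finset.univ_inter, Finset.univ_inter,
        Finset.sum_const, Finset.sum_const, Finset.card_univ, Fintype.card_fin,
        nsmul_eq_mul, nsmul_eq_mul, nsmul_eq_mul, ← ha_def, ← hb_def]
    rw [hsum] at h
    have h' := mul_le_mul_of_nonneg_left h hn0.le
    have hcl : (n:ℝ) * ((1/(n:ℝ)) * ((n:ℝ) * f m + a * (f (m + τ/a) - f m)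
        + b * (f (m - τ/b) - f m)))
        = (n:ℝ) * f m + a * (f (m + τ/a) - f m) + b * (f (m - τ/b) - f m) := by
      field_simp
    rw [hcl] at h'
    nlinarith [h']
  -- now fix u v
  intro u hu v hv
  obtain ⟨ε₁, hε₁, hball₁⟩ := Metric.isOpen_iff.mp hop u hu
  obtain ⟨ε₂, hε₂, hball₂⟩ := Metric.isOpen_iff.mp hop v hv
  set lo : ℝ := min u v with hlo_def
  set hi : ℝ := max u v with hhi_def
  set ε : ℝ := min ε₁ ε₂ / 2 with hε_def
  have hε : 0 < ε := by
    have := lt_min hε₁ hε₂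
    simp only [hε_def]
    linarith
  have hεε₁ : ε < ε₁ := by
    have h := min_le_left ε₁ ε₂
    simp only [hε_def]; linarith [lt_min hε₁ hε₂]
  have hεε₂ : ε < ε₂ := by
    have h := min_le_right ε₁ ε₂
    simp only [hε_def]; linarith [lt_min hε₁ hε₂]
  have hloI : lo ∈ I := by
    rcases le_total u v with h | h
    · rw [hlo_def, min_eq_left h]; exact hu
    · rw [hlo_def, min_eq_right h]; exact hv
  have hhiI : hi ∈ I := by
    rcases le_total u v with h | h
    · rw [hhi_def, max_eq_right h]; exact hv
    · rw [hhi_def, max_eq_left h]; exact hu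
  have hball : ∀ y : ℝ, lo - ε ≤ y → y ≤ hi + ε → y ∈ I := by
    intro y h1 h2
    rcases lt_or_ge y lo with hy | hy
    · rcases le_total u v with h | h
      · have hlu : lo = u := by rw [hlo_def, min_eq_left h]
        apply hball₁
        rw [Metric.mem_ball, Real.dist_eq, abs_lt]
        constructor <;> [linarith [h1, hy, hlu ▸ hy, hεε₁]; linarith]
      · have hlu : lo = v := by rw [hlo_def, min_eq_right h]
        apply hball₂
        rw [Metric.mem_ball, Real.dist_eq, abs_lt]
        constructor <;> [skip; skip] <;> rw [hlu] at h1 hy <;> [linarith; linarith]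
    · rcases lt_or_ge hi y with hy2 | hy2
      · rcases le_total u v with h | h
        · have hhv : hi = v := by rw [hhi_def, max_eq_right h]
          apply hball₂
          rw [Metric.mem_ball, Real.dist_eq, abs_lt]
          rw [hhv] at h2 hy2
          constructor <;> linarith
        · have hhv : hi = u := by rw [hhi_def, max_eq_left h]
          apply hball₁
          rw [Metric.mem_ball, Real.dist_eq, abs_lt]
          rw [hhv] at h2 hy2
          constructor <;> linarith
      · exact hconv.ordConnected.out hloI hhiI ⟨hy, hy2⟩
  set C : ℝ := (∑ i, |c i|) + 1 with hC_def
  have hC : 0 < C := by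
    have : 0 ≤ ∑ i, |c i| := Finset.sum_nonneg fun i _ => abs_nonneg _
    simp only [hC_def]; linarith
  have hCi : ∀ i, |c i| ≤ C := by
    intro i
    have h1 : |c i| ≤ ∑ j, |c j| :=
      Finset.single_le_sum (f := fun j => |c j|) (fun j _ => abs_nonneg _) (Finset.mem_univ i)
    simp only [hC_def]; linarith
  set K : ℝ := a * b * C with hK_def
  have hK : 0 < K := by positivity
  -- local lambda-convexity
  have loc : ∀ m p q : ℝ, lo ≤ m → m ≤ hi → a * p + b * q = (a + b) * m →
      |p - q| * K ≤ ε → (a + b) * f m ≤ a * f p + b * f q := by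
    intro m p q hm1 hm2 hpq hsmall
    set τ : ℝ := a * b * (p - q) / (a + b) with hτ_def
    have hm : m = (a * p + b * q) / (a + b) := by
      rw [hpq]; field_simp
    have hp : m + τ / a = p := by
      rw [hm, hτ_def]; field_simp; ring
    have hq : m - τ / b = q := by
      rw [hm, hτ_def]; field_simp; ring
    have htb : ∀ i, |τ * c i| ≤ ε := by
      intro i
      have h1 : |τ| = a * b * |p - q| / (a + b) := by
        rw [hτ_def, abs_div, abs_mul, abs_mul, abs_of_pos ha0, abs_of_pos hb0,
          abs_of_pos hab]
      have h2 : |τ| ≤ a * b * |p - q| := by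
        rw [h1]
        exact div_le_self (mul_nonneg (mul_nonneg ha0.le hb0.le) (abs_nonneg _)) (by linarith)
      calc |τ * c i| = |τ| * |c i| := abs_mul _ _
        _ ≤ (a * b * |p - q|) * C :=
            mul_le_mul h2 (hCi i) (abs_nonneg _) (mul_nonneg (mul_nonneg ha0.le hb0.le) (abs_nonneg _))
        _ = |p - q| * K := by rw [hK_def]; ring
        _ ≤ ε := hsmall
    have hmem : ∀ i, m + τ * c i ∈ I := by
      intro i
      have := abs_le.mp (htb i)
      exact hball _ (by linarith) (by linarith)
    have := core m τ hmem
    rwa [hp, hq] at this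
  -- local midpoint convexity (Kuhn's trick)
  have base : ∀ m s : ℝ, 0 ≤ s → s * K ≤ ε → lo ≤ m - s → m + s ≤ hi →
      2 * f m ≤ f (m - s) + f (m + s) := by
    intro m s hs hsK h1 h2
    have hm1 : lo ≤ m := by linarith
    have hm2 : m ≤ hi := by linarith
    set N1 : ℝ := m + b * s / (a + b) with hN1
    set N2 : ℝ := m - a * s / (a + b) with hN2
    have hfrac_b : b * s / (a + b) ≤ s := by
      rw [div_le_iff₀ hab]; nlinarith
    have hfrac_a : a * s / (a + b) ≤ s := by
      rw [div_le_iff₀ hab]; nlinarith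
    have hfb0 : 0 ≤ b * s / (a + b) := by positivity
    have hfa0 : 0 ≤ a * s / (a + b) := by positivity
    have e1 : a * N1 + b * N2 = (a + b) * m := by
      rw [hN1, hN2]; field_simp; ring
    have d1 : |N1 - N2| * K ≤ ε := by
      have hdiff : N1 - N2 = s := by rw [hN1, hN2]; field_simp; ring
      rw [hdiff, abs_of_nonneg hs]; exact hsK
    have i1 := loc m N1 N2 hm1 hm2 e1 d1
    have e2 : a * m + b * (m + s) = (a + b) * N1 := by
      rw [hN1]; field_simp; ring
    have d2 : |m - (m + s)| * K ≤ ε := by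
      rw [show m - (m + s) = -s by ring, abs_neg, abs_of_nonneg hs]; exact hsK
    have i2 := loc N1 m (m + s) (by rw [hN1]; linarith) (by rw [hN1]; linarith) e2 d2
    have e3 : a * (m - s) + b * m = (a + b) * N2 := by
      rw [hN2]; field_simp; ring
    have d3 : |(m - s) - m| * K ≤ ε := by
      rw [show (m - s) - m = -s by ring, abs_neg, abs_of_nonneg hs]; exact hsK
    have i3 := loc N2 (m - s) m (by rw [hN2]; linarith) (by rw [hN2]; linarith) e3 d3
    have j2 := mul_le_mul_of_nonneg_left i2 ha0.le
    have j3 := mul_le_mul_of_nonneg_left i3 hb0.le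
    have j1 := mul_le_mul_of_nonneg_left i1 hab.le
    nlinarith [mul_pos ha0 hb0]
  -- globalize by doubling
  have main : ∀ k : ℕ, ∀ m s : ℝ, 0 ≤ s → s * K ≤ 2 ^ k * ε → lo ≤ m - s → m + s ≤ hi →
      2 * f m ≤ f (m - s) + f (m + s) := by
    intro k
    induction k with
    | zero =>
      intro m s hs h h1 h2
      exact base m s hs (by simpa using h) h1 h2
    | succ k ih =>
      intro m s hs h h1 h2
      have hs2 : 0 ≤ s / 2 := by linarith
      have hh : (s / 2) * K ≤ 2 ^ k * ε := by
        rw [pow_succ] at h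
        nlinarith
      have A1 := ih m (s / 2) hs2 hh (by linarith) (by linarith)
      have A2 := ih (m + s / 2) (s / 2) hs2 hh (by linarith) (by linarith)
      have A3 := ih (m - s / 2) (s / 2) hs2 hh (by linarith) (by linarith)
      rw [show m + s / 2 - s / 2 = m by ring, show m + s / 2 + s / 2 = m + s by ring] at A2
      rw [show m - s / 2 - s / 2 = m - s by ring, show m - s / 2 + s / 2 = m by ring] at A3
      linarith
  -- finish
  obtain ⟨k, hk⟩ := pow_unbounded_of_one_lt ((|u - v| / 2 * K) / ε) (one_lt_two (α := ℝ))
  have hkk : (|u - v| / 2) * K ≤ 2 ^ k * ε := by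
    rw [div_lt_iff₀ hε] at hk
    linarith
  have hm1 : lo ≤ (u + v) / 2 - |u - v| / 2 := by
    rcases le_total u v with h | h
    · rw [hlo_def, min_eq_left h, abs_of_nonpos (by linarith : u - v ≤ 0)]; linarith
    · rw [hlo_def, min_eq_right h, abs_of_nonneg (by linarith : 0 ≤ u - v)]; linarith
  have hm2 : (u + v) / 2 + |u - v| / 2 ≤ hi := by
    rcases le_total u v with h | h
    · rw [hhi_def, max_eq_right h, abs_of_nonpos (by linarith : u - v ≤ 0)]; linarith
    · rw [hhi_def, max_eq_left h, abs_of_nonneg (by linarith : 0 ≤ u - v)]; linarith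
  have hfin := main k ((u + v) / 2) (|u - v| / 2) (by positivity) hkk hm1 hm2
  rcases le_total u v with h | h
  · rw [abs_of_nonpos (by linarith : u - v ≤ 0)] at hfin
    rw [show (u + v) / 2 - -(u - v) / 2 = u by ring,
      show (u + v) / 2 + -(u - v) / 2 = v by ring] at hfin
    linarith
  · rw [abs_of_nonneg (by linarith : 0 ≤ u - v)] at hfin
    rw [show (u + v) / 2 - (u - v) / 2 = v by ring,
      show (u + v) / 2 + (u - v) / 2 = u by ring] at hfin
    linarith
end

section
/- Let I ⊆ ℝ be a nonempty open interval and f : I → ℝ a Jensen convex function. Then for every n ∈ ℕ, every n×n doubly stochastic matrix P = (p_{i,j}), and all x₁,…,xₙ ∈ I, one has f((x₁+⋯+xₙ)/n) ≤ (1/n)∑_{i=1}^n f(p_{i,1}x₁+⋯+p_{i,n}xₙ). -/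
open Finset

private lemma jensen_eq_weights (I : Set ℝ) (hconv : Convex ℝ I) (f : ℝ → ℝ)
    (hJ : ∀ u ∈ I, ∀ v ∈ I, f ((u + v) / 2) ≤ (f u + f v) / 2) :
    ∀ n : ℕ, 0 < n → ∀ x : Fin n → ℝ, (∀ i, x i ∈ I) →
      f ((∑ i, x i) / n) ≤ (∑ i, f (x i)) / n := by
  set S : ℕ → Prop := fun n => ∀ x : Fin n → ℝ, (∀ i, x i ∈ I) →
      f ((∑ i, x i) / n) ≤ (∑ i, f (x i)) / n with hS
  have mem_mean : ∀ n : ℕ, 0 < n → ∀ x : Fin n → ℝ, (∀ i, x i ∈ I) →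
      (∑ i, x i) / n ∈ I := by
    intro n hn x hx
    have hn' : (0:ℝ) < n := by exact_mod_cast hn
    have : (∑ i, x i) / n = ∑ i : Fin n, ((1:ℝ)/n) • x i := by
      rw [Finset.sum_div]
      exact Finset.sum_congr rfl fun i _ => by rw [smul_eq_mul]; ring
    rw [this]
    refine hconv.sum_mem (fun i _ => by positivity) ?_ (fun i _ => hx i)
    simp [Finset.sum_const, Finset.card_univ]
    field_simp
  have hone : S 1 := by
    intro x hx
    simp
  have hdouble : ∀ n, 0 < n → S n → S (n + n) := by
    intro n hn hSn x hx
    set y : Fin n → ℝ := fun i => (x (Fin.castAdd n i) + x (Fin.natAdd n i)) / 2 with hy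
    have hyI : ∀ i, y i ∈ I := by
      intro i
      have hmem := hconv (hx (Fin.castAdd n i)) (hx (Fin.natAdd n i))
        (by norm_num : (0:ℝ) ≤ 1/2) (by norm_num : (0:ℝ) ≤ 1/2) (by norm_num)
      have : y i = (1/2 : ℝ) • x (Fin.castAdd n i) + (1/2 : ℝ) • x (Fin.natAdd n i) := by
        simp only [hy, smul_eq_mul]; ring
      rw [this]; exact hmem
    have hn' : (0:ℝ) < n := by exact_mod_cast hn
    have hsum : ∑ i, x i = 2 * ∑ i, y i := by
      rw [Fin.sum_univ_add]
      simp only [hy]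
      rw [Finset.mul_sum]
      rw [← Finset.sum_add_distrib]
      congr 1; ext i; ring
    have hmean : (∑ i, x i) / ((n:ℝ) + n) = (∑ i, y i) / n := by
      rw [hsum]; field_simp; ring
    have h1 := hSn y hyI
    have h2 : ∑ i, f (y i) ≤ (∑ i, (f (x (Fin.castAdd n i)) + f (x (Fin.natAdd n i))) / 2) := by
      apply Finset.sum_le_sum
      intro i _
      exact hJ _ (hx _) _ (hx _)
    have h3 : (∑ i, (f (x (Fin.castAdd n i)) + f (x (Fin.natAdd n i))) / 2)
        = (∑ i : Fin (n + n), f (x i)) / 2 := by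
      rw [Fin.sum_univ_add, ← Finset.sum_div, ← Finset.sum_add_distrib]
    rw [show ((n + n : ℕ) : ℝ) = (n:ℝ) + n by push_cast; ring, hmean]
    have h4 : (∑ i, f (y i)) / (n:ℝ) ≤ ((∑ i : Fin (n + n), f (x i)) / 2) / n := by
      gcongr
      rw [← h3]; exact h2
    have h5 : ((∑ i : Fin (n + n), f (x i)) / 2) / (n:ℝ)
        = (∑ i : Fin (n + n), f (x i)) / ((n:ℝ) + n) := by
      rw [div_div]; congr 1; ring
    linarith
  have hdescend : ∀ n, 0 < n → S (n + 1) → S n := by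
    intro n hn hSn1 x hx
    set m : ℝ := (∑ i, x i) / n with hm
    have hmI : m ∈ I := mem_mean n hn x hx
    have hn' : (0:ℝ) < n := by exact_mod_cast hn
    set g : Fin (n + 1) → ℝ := Fin.snoc x m with hg
    have hgI : ∀ i, g i ∈ I := by
      intro i
      refine Fin.lastCases ?_ ?_ i
      · simpa [hg] using hmI
      · intro j; simpa [hg] using hx j
    have hgsum : ∑ i, g i = ((n:ℝ) + 1) * m := by
      rw [Fin.sum_univ_castSucc]
      simp only [hg, Fin.snoc_castSucc, Fin.snoc_last]
      have : ∑ i, x i = n * m := by rw [hm]; field_simp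
      rw [this]; ring
    have h1 := hSn1 g hgI
    rw [hgsum] at h1
    have hmean : ((n:ℝ) + 1) * m / ((n:ℕ) + 1 : ℕ) = m := by
      push_cast; field_simp
    rw [hmean] at h1
    have hfsum : ∑ i, f (g i) = (∑ i, f (x i)) + f m := by
      rw [Fin.sum_univ_castSucc]
      simp [hg]
    rw [hfsum] at h1
    -- h1 : f m ≤ (∑ f x + f m) / (n+1)
    have h2 : ((n:ℝ) + 1) * f m ≤ (∑ i, f (x i)) + f m := by
      have hpos : (0:ℝ) < (n:ℝ) + 1 := by positivity
      rw [show (((n:ℕ) + 1 : ℕ) : ℝ) = (n:ℝ) + 1 by push_cast; ring] at h1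
      calc ((n:ℝ) + 1) * f m = ((n:ℝ) + 1) * f m := rfl
        _ ≤ ((n:ℝ) + 1) * (((∑ i, f (x i)) + f m) / ((n:ℝ) + 1)) := by
            apply mul_le_mul_of_nonneg_left h1 (le_of_lt hpos)
        _ = (∑ i, f (x i)) + f m := by field_simp
    have h3 : (n:ℝ) * f m ≤ ∑ i, f (x i) := by linarith
    rw [← hm] at *
    rw [hm]
    calc f ((∑ i, x i) / n) = f m := rfl
      _ ≤ (∑ i, f (x i)) / n := by
          rw [le_div_iff₀ hn']; linarith [h3]
  have hpow : ∀ k : ℕ, S (2 ^ k) := by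
    intro k
    induction k with
    | zero => simpa using hone
    | succ k ih =>
      have h2k : 0 < 2 ^ k := Nat.pow_pos (by norm_num)
      have := hdouble (2 ^ k) h2k ih
      have heq : 2 ^ (k + 1) = 2 ^ k + 2 ^ k := by ring
      rw [heq]; exact this
  intro n hn
  have hle : n ≤ 2 ^ n := Nat.le_of_lt (Nat.lt_two_pow_self)
  exact Nat.decreasingInduction' (fun k _ hnk hk => hdescend k (lt_of_lt_of_le hn hnk) hk)
    hle (hpow n)

theorem stmt_1 (I : Set ℝ) (hne : I.Nonempty) (hop : IsOpen I) (hconv : Convex ℝ I)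
    (f : ℝ → ℝ)
    (hJ : ∀ u ∈ I, ∀ v ∈ I, f ((u + v) / 2) ≤ (f u + f v) / 2) :
    ∀ (n : ℕ), 0 < n → ∀ (P : Matrix (Fin n) (Fin n) ℝ),
      (∀ i j, 0 ≤ P i j) → (∀ i, ∑ j, P i j = 1) → (∀ j, ∑ i, P i j = 1) →
      ∀ x : Fin n → ℝ, (∀ i, x i ∈ I) →
        f ((∑ i, x i) / n) ≤ (1 / n) * ∑ i, f (∑ j, P i j * x j) := by
  intro n hn P hP hrow hcol x hx
  set y : Fin n → ℝ := fun i => ∑ j, P i j * x j with hy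
  have hyI : ∀ i, y i ∈ I := by
    intro i
    have : y i = ∑ j, P i j • x j := by simp [hy, smul_eq_mul]
    rw [this]
    exact hconv.sum_mem (fun j _ => hP i j) (hrow i) (fun j _ => hx j)
  have hsum : ∑ i, y i = ∑ i, x i := by
    simp only [hy]
    rw [Finset.sum_comm]
    calc ∑ j, ∑ i, P i j * x j = ∑ j, (∑ i, P i j) * x j := by
          congr 1; ext j; rw [Finset.sum_mul]
      _ = ∑ j, x j := by congr 1; ext j; rw [hcol j, one_mul]
  have := jensen_eq_weights I hconv f hJ n hn y hyI
  rw [hsum] at this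
  calc f ((∑ i, x i) / n) ≤ (∑ i, f (y i)) / n := this
    _ = (1 / n) * ∑ i, f (∑ j, P i j * x j) := by rw [hy]; ring
end

section
/- Let I ⊆ ℝ be a nonempty open interval and f : I → ℝ. If f is t-convex for some t ∈ (0,1), i.e., f(tx+(1−t)y) ≤ t f(x)+(1−t) f(y) for all x,y ∈ I, then f is Jensen convex on I. -/
/-!
Let `m` be the midpoint of `u` and `v`, and put `a = t m + (1 - t) u`, `b = t v + (1 - t) m`.
Then `t a + (1 - t) b = m`, so applying `t`-convexity three times gives
`f m ≤ (t² + (1 - t)²) f m + t (1 - t) (f u + f v)`. Since `t² + (1 - t)² = 1 - 2 t (1 - t)`,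
this is `2 t (1 - t) f m ≤ t (1 - t) (f u + f v)`, and `t (1 - t) > 0`.
-/

section

variable {E : Type*} [AddCommGroup E] [Module ℝ E]

lemma combo_combo_midpoint_eq_midpoint (t : ℝ) (u v : E) :
    t • (t • midpoint ℝ u v + (1 - t) • u) + (1 - t) • (t • v + (1 - t) • midpoint ℝ u v) =
      midpoint ℝ u v := by
  rw [midpoint_eq_smul_add, invOf_eq_inv]
  module

lemma Convex.map_midpoint_le_of_forall_map_combo_le {s : Set E} (hs : Convex ℝ s) {f : E → ℝ}
    {t : ℝ} (ht0 : 0 < t) (ht1 : t < 1)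
    (hf : ∀ x ∈ s, ∀ y ∈ s, f (t • x + (1 - t) • y) ≤ t * f x + (1 - t) * f y)
    {u v : E} (hu : u ∈ s) (hv : v ∈ s) :
    f (midpoint ℝ u v) ≤ (f u + f v) / 2 := by
  set m := midpoint ℝ u v
  have hm : m ∈ s := hs.midpoint_mem hu hv
  have combo_mem : ∀ {x y}, x ∈ s → y ∈ s → t • x + (1 - t) • y ∈ s := fun hx hy =>
    hs hx hy ht0.le (sub_nonneg.2 ht1.le) (add_sub_cancel t 1)
  have hmu := hf m hm u hu
  have hvm := hf v hv m hm
  have hab := hf _ (combo_mem hm hu) _ (combo_mem hv hm)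
  rw [combo_combo_midpoint_eq_midpoint] at hab
  have key : t * (1 - t) * (2 * f m) ≤ t * (1 - t) * (f u + f v) := by
    linarith [mul_le_mul_of_nonneg_left hmu ht0.le,
      mul_le_mul_of_nonneg_left hvm (sub_nonneg.2 ht1.le)]
  linarith [le_of_mul_le_mul_left key (mul_pos ht0 (sub_pos.2 ht1))]

end

theorem stmt_3_general (I : Set ℝ) (hconv : Convex ℝ I)
    (f : ℝ → ℝ) (t : ℝ) (ht0 : 0 < t) (ht1 : t < 1)
    (htconv : ∀ x ∈ I, ∀ y ∈ I, f (t * x + (1 - t) * y) ≤ t * f x + (1 - t) * f y) :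
    ∀ u ∈ I, ∀ v ∈ I, f ((u + v) / 2) ≤ (f u + f v) / 2 := by
  intro u hu v hv
  have h := hconv.map_midpoint_le_of_forall_map_combo_le ht0 ht1 htconv hu hv
  rwa [midpoint_eq_smul_add, smul_eq_mul, invOf_eq_inv, inv_mul_eq_div] at h

theorem stmt_3 (I : Set ℝ) (hne : I.Nonempty) (hop : IsOpen I) (hconv : Convex ℝ I)
    (f : ℝ → ℝ) (t : ℝ) (ht0 : 0 < t) (ht1 : t < 1)
    (htconv : ∀ x ∈ I, ∀ y ∈ I, f (t * x + (1 - t) * y) ≤ t * f x + (1 - t) * f y) :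
    ∀ u ∈ I, ∀ v ∈ I, f ((u + v) / 2) ≤ (f u + f v) / 2 :=
  stmt_3_general I hconv f t ht0 ht1 htconv
end

section
/- Let I ⊆ ℝ be a nonempty open interval, f : I → ℝ, and n ∈ ℕ with n ≥ 2. If f((x₁+⋯+xₙ)/n) ≤ (1/n)∑_{i=1}^n f((x₁+⋯+xₙ−x_i)/(n−1)) holds for all x₁,…,xₙ ∈ I, then f is Jensen convex on I. -/
/-!
Feeding the hypothesis the vector `(c - (n-1)s, c + (n-1)s, c, …, c)`, whose leave-one-out means
are `c + s`, `c - s`, `c, …, c`, gives the local midpoint inequality `2 f c ≤ f (c - s) + f (c + s)`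
whenever `c ± (n-1)s ∈ I`. For `u ≤ v` in the open interval `I`, split `[u, v]` into `2N` steps of
length `δ` with `(n-1)δ` below the distance from `[u, v]` to the boundary of `I`; then
`j ↦ f ((u+v)/2 + jδ)` is discretely convex on `[-N, N]`, so its value at `0` lies below the mean
of its values `f u`, `f v` at `∓N`.
-/

open Finset

lemma two_mul_le_add_of_le_mean_leaveOneOut {I : Set ℝ} (hI : I.OrdConnected) {f : ℝ → ℝ}
    {n : ℕ} (hn : 2 ≤ n)
    (hineq : ∀ x : Fin n → ℝ, (∀ i, x i ∈ I) →
      f ((∑ i, x i) / n) ≤ (1 / n) * ∑ i, f (((∑ j, x j) - x i) / ((n : ℝ) - 1)))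
    (c s : ℝ) (h₁ : c - (n - 1) * s ∈ I) (h₂ : c + (n - 1) * s ∈ I) :
    2 * f c ≤ f (c - s) + f (c + s) := by
  obtain ⟨k, rfl⟩ : ∃ k, n = k + 2 := ⟨n - 2, by omega⟩
  have hk : ((k + 2 : ℕ) : ℝ) - 1 = k + 1 := by push_cast; ring
  rw [hk] at h₁ h₂ hineq
  have hc : c ∈ I := hI.uIcc_subset h₁ h₂ <| by
    rw [Set.mem_uIcc]
    rcases le_total 0 s with hs | hs
    · left; constructor <;> nlinarith
    · right; constructor <;> nlinarith
  set t : Fin (k + 2) → ℝ := Fin.cons (-s) (Fin.cons s 0)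
  have ht : ∑ i, t i = 0 := by simp [t, Fin.sum_univ_succ]
  have hleave : ∀ i, ((∑ j, (c + (k + 1) * t j)) - (c + (k + 1) * t i)) / (k + 1) = c - t i := by
    intro i
    simp only [sum_add_distrib, ← mul_sum, ht, sum_const, card_univ,
      Fintype.card_fin, nsmul_eq_mul]
    field_simp
    push_cast
    ring
  have hmem : ∀ i, c + (k + 1) * t i ∈ I := by
    intro i
    refine Fin.cases ?_ (Fin.cases ?_ fun _ => ?_) i
    · simpa [t, sub_eq_add_neg] using h₁
    · simpa [t] using h₂
    · simpa [t] using hc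
  have hmean := hineq _ hmem
  simp only [hleave] at hmean
  simp only [sum_add_distrib, sum_const, card_univ, Fintype.card_fin, nsmul_eq_mul, Nat.cast_add,
    Nat.cast_ofNat, ← mul_sum, Fin.sum_univ_succ, Fin.cons_zero, Fin.cons_succ, Pi.zero_apply,
    add_zero, neg_add_cancel, mul_zero, one_div, sub_neg_eq_add, sub_zero, t] at hmean
  rw [mul_div_cancel_left₀ _ (by positivity), le_inv_mul_iff₀ (by positivity)] at hmean
  linarith

lemma exists_Icc_sub_add_subset {I : Set ℝ} (hop : IsOpen I) (hI : I.OrdConnected)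
    {u v : ℝ} (hu : u ∈ I) (hv : v ∈ I) : ∃ ε > 0, Set.Icc (u - ε) (v + ε) ⊆ I := by
  obtain ⟨ε₁, hε₁, hu'⟩ := Metric.isOpen_iff.mp hop u hu
  obtain ⟨ε₂, hε₂, hv'⟩ := Metric.isOpen_iff.mp hop v hv
  have hε : 0 < min ε₁ ε₂ := lt_min hε₁ hε₂
  refine ⟨min ε₁ ε₂ / 2, by positivity, hI.out (hu' ?_) (hv' ?_)⟩
  · rw [Real.ball_eq_Ioo, Set.mem_Ioo]
    constructor <;> linarith [min_le_left ε₁ ε₂]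
  · rw [Real.ball_eq_Ioo, Set.mem_Ioo]
    constructor <;> linarith [min_le_right ε₁ ε₂]

lemma two_mul_apply_zero_le_of_forall_two_mul_le {a : ℤ → ℝ} {N : ℕ}
    (h : ∀ j : ℤ, |j| < N → 2 * a j ≤ a (j - 1) + a (j + 1)) :
    2 * a 0 ≤ a (-N) + a N := by
  set g : ℕ → ℝ := fun k => a k + a (-k)
  have hmono : ∀ k < N, g k ≤ g (k + 1) := by
    intro k
    induction k with
    | zero =>
      intro hN
      have := h 0 (by simpa using hN)
      norm_num [g] at this ⊢
      linarith
    | succ k ih =>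
      intro hk
      have hk' : (k : ℤ) + 1 < N := by exact_mod_cast hk
      have hpos := h (k + 1) (by rw [abs_lt]; constructor <;> omega)
      have hneg := h (-(k + 1)) (by rw [abs_lt]; constructor <;> omega)
      have := ih (by omega)
      simp only [g] at this ⊢
      push_cast at this ⊢
      ring_nf at hpos hneg this ⊢
      linarith
  have : g 0 ≤ g N := by
    rw [← sub_nonneg, ← sum_range_sub]
    exact sum_nonneg fun k hk => sub_nonneg.mpr (hmono k (mem_range.mp hk))
  simp only [g, Nat.cast_zero, neg_zero] at this
  linarith

lemma map_midpoint_le_of_forall_two_mul_le {I : Set ℝ} (hop : IsOpen I) (hI : I.OrdConnected)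
    {f : ℝ → ℝ} {K : ℝ}
    (h : ∀ c s, c - K * s ∈ I → c + K * s ∈ I → 2 * f c ≤ f (c - s) + f (c + s))
    {u v : ℝ} (hu : u ∈ I) (hv : v ∈ I) (huv : u ≤ v) :
    f ((u + v) / 2) ≤ (f u + f v) / 2 := by
  obtain ⟨ε, hε, hIcc⟩ := exists_Icc_sub_add_subset hop hI hu hv
  obtain ⟨N, hN⟩ := exists_nat_gt (|K| * (v - u) / (2 * ε))
  have hNpos : (0 : ℝ) < N := lt_of_le_of_lt (by positivity) hN
  set δ := (v - u) / (2 * N) with hδ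
  have hδ0 : 0 ≤ δ := by positivity
  have hNδ : N * δ = (v - u) / 2 := by rw [hδ]; field_simp
  have hKδ : |K| * δ ≤ ε := by
    rw [hδ, mul_div_assoc', div_le_iff₀ (by positivity)]
    rw [div_lt_iff₀ (by positivity)] at hN
    linarith
  have hchord := two_mul_apply_zero_le_of_forall_two_mul_le
    (a := fun j : ℤ => f ((u + v) / 2 + j * δ)) (N := N) fun j hj => by
      have hj' : |(j : ℝ)| * δ ≤ N * δ - δ := by
        have : |(j : ℝ)| + 1 ≤ N := by exact_mod_cast (show |j| + 1 ≤ N by omega)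
        nlinarith
      have hKs : |K * δ| ≤ |K| * δ := by rw [abs_mul, abs_of_nonneg hδ0]
      have hjs : |j * δ| ≤ |(j : ℝ)| * δ := by rw [abs_mul, abs_of_nonneg hδ0]
      have hmem : ∀ t, |t| ≤ N * δ - δ + ε → (u + v) / 2 + t ∈ I := fun t ht => by
        apply hIcc
        rw [abs_le] at ht
        constructor <;> linarith
      have := h ((u + v) / 2 + j * δ) δ
        (by rw [add_sub_assoc]; exact hmem _ (by linarith [abs_sub (j * δ) (K * δ)]))
        (by rw [add_assoc]; exact hmem _ (by linarith [abs_add_le (j * δ) (K * δ)]))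
      simp only [Int.cast_sub, Int.cast_add, Int.cast_one]
      convert this using 3 <;> ring
  simp only [Int.cast_zero, zero_mul, add_zero, Int.cast_neg, Int.cast_natCast, neg_mul, hNδ] at hchord
  rw [show (u + v) / 2 + -((v - u) / 2) = u by ring, show (u + v) / 2 + (v - u) / 2 = v by ring]
    at hchord
  linarith

theorem stmt_13_general (I : Set ℝ) (hop : IsOpen I) (hconv : Convex ℝ I)
    (f : ℝ → ℝ) (n : ℕ) (hn : 2 ≤ n)
    (hineq : ∀ x : Fin n → ℝ, (∀ i, x i ∈ I) →
      f ((∑ i, x i) / n) ≤ (1 / n) * ∑ i, f (((∑ j, x j) - x i) / ((n : ℝ) - 1))) :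
    ∀ u ∈ I, ∀ v ∈ I, f ((u + v) / 2) ≤ (f u + f v) / 2 := by
  have hI := hconv.ordConnected
  have hloc := two_mul_le_add_of_le_mean_leaveOneOut hI hn hineq
  intro u hu v hv
  rcases le_total u v with huv | hvu
  · exact map_midpoint_le_of_forall_two_mul_le hop hI hloc hu hv huv
  · rw [add_comm u, add_comm (f u)]
    exact map_midpoint_le_of_forall_two_mul_le hop hI hloc hv hu hvu

theorem stmt_13 (I : Set ℝ) (hne : I.Nonempty) (hop : IsOpen I) (hconv : Convex ℝ I)
    (f : ℝ → ℝ) (n : ℕ) (hn : 2 ≤ n)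
    (hineq : ∀ x : Fin n → ℝ, (∀ i, x i ∈ I) →
      f ((∑ i, x i) / n) ≤ (1 / n) * ∑ i, f (((∑ j, x j) - x i) / ((n : ℝ) - 1))) :
    ∀ u ∈ I, ∀ v ∈ I, f ((u + v) / 2) ≤ (f u + f v) / 2 :=
  stmt_13_general I hop hconv f n hn hineq
end

section
/- Let I ⊆ ℝ be a nonempty open interval, f : I → ℝ Jensen convex, and n ∈ ℕ with n ≥ 2. Then f((x₁+⋯+xₙ)/n) ≤ (1/n)∑_{i=1}^n f((x₁+⋯+xₙ−x_i)/(n−1)) for all x₁,…,xₙ ∈ I. -/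
/-!
Midpoint convexity gives the equal-weight Jensen inequality for `2 ^ m` points by repeated
halving, and for every `n ≥ 1` by Cauchy's backward step: padding `n` points with their own
mean does not change the mean. The theorem is this inequality applied to the `n` points
`yᵢ = (x₁ + ⋯ + xₙ - xᵢ) / (n - 1)`, which lie in `I` as means of `n - 1` of the `xⱼ` and whose
mean is the mean of the `xⱼ`.
-/

open Finset

def MidpointConvexOn (I : Set ℝ) (f : ℝ → ℝ) : Prop :=
  ∀ u ∈ I, ∀ v ∈ I, f ((u + v) / 2) ≤ (f u + f v) / 2

def EqualWeightJensen (I : Set ℝ) (f : ℝ → ℝ) (n : ℕ) : Prop :=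
  ∀ z : Fin n → ℝ, (∀ i, z i ∈ I) → f ((∑ i, z i) / n) ≤ (∑ i, f (z i)) / n

theorem Convex.sum_div_card_mem {I : Set ℝ} (hI : Convex ℝ I) {ι : Type*} {s : Finset ι}
    (hs : s.Nonempty) {z : ι → ℝ} (hz : ∀ i ∈ s, z i ∈ I) : (∑ i ∈ s, z i) / #s ∈ I := by
  have hcard : (#s : ℝ) ≠ 0 := by exact_mod_cast hs.card_pos.ne'
  have hmem := hI.sum_mem (w := fun _ ↦ (#s : ℝ)⁻¹) (fun _ _ ↦ by positivity)
    (by rw [sum_const, nsmul_eq_mul, mul_inv_cancel₀ hcard]) hz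
  rwa [← smul_sum, smul_eq_mul, inv_mul_eq_div] at hmem

namespace EqualWeightJensen

variable {I : Set ℝ} {f : ℝ → ℝ}

theorem one : EqualWeightJensen I f 1 := fun z _ ↦ by simp

theorem add_self (hI : Convex ℝ I) (hf : MidpointConvexOn I f) {n : ℕ} (hn : 0 < n)
    (h : EqualWeightJensen I f n) : EqualWeightJensen I f (n + n) := by
  intro z hz
  have hnR : (n : ℝ) ≠ 0 := by exact_mod_cast hn.ne'
  have hne : (univ : Finset (Fin n)).Nonempty := univ_nonempty_iff.mpr ⟨⟨0, hn⟩⟩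
  set u := (∑ i, z (Fin.castAdd n i)) / n
  set v := (∑ i, z (Fin.natAdd n i)) / n
  have hu : u ∈ I := by
    simpa only [card_univ, Fintype.card_fin] using
      hI.sum_div_card_mem hne fun i _ ↦ hz (Fin.castAdd n i)
  have hv : v ∈ I := by
    simpa only [card_univ, Fintype.card_fin] using
      hI.sum_div_card_mem hne fun i _ ↦ hz (Fin.natAdd n i)
  have hmean : (∑ i, z i) / ↑(n + n) = (u + v) / 2 := by
    rw [Fin.sum_univ_add]; push_cast; simp only [u, v]; field_simp; ring
  calc f ((∑ i, z i) / ↑(n + n)) = f ((u + v) / 2) := by rw [hmean]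
    _ ≤ (f u + f v) / 2 := hf u hu v hv
    _ ≤ ((∑ i, f (z (Fin.castAdd n i))) / n + (∑ i, f (z (Fin.natAdd n i))) / n) / 2 := by
      gcongr
      exacts [h _ fun i ↦ hz _, h _ fun i ↦ hz _]
    _ = (∑ i, f (z i)) / ↑(n + n) := by
      rw [Fin.sum_univ_add]; push_cast; field_simp; ring

theorem pow_two (hI : Convex ℝ I) (hf : MidpointConvexOn I f) (m : ℕ) :
    EqualWeightJensen I f (2 ^ m) := by
  induction m with
  | zero => exact one
  | succ m ih => simpa only [pow_succ, mul_two] using ih.add_self hI hf (by positivity)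

theorem of_succ (hI : Convex ℝ I) {n : ℕ} (hn : 0 < n) (h : EqualWeightJensen I f (n + 1)) :
    EqualWeightJensen I f n := by
  intro z hz
  have hnR : (0 : ℝ) < n := by exact_mod_cast hn
  set a := (∑ i, z i) / n
  have ha : a ∈ I := by
    simpa [a] using hI.sum_div_card_mem (univ_nonempty_iff.mpr ⟨⟨0, hn⟩⟩) fun i _ ↦ hz i
  have hsum : ∑ i, z i = n * a := by simp only [a]; field_simp
  have hpad := h (Fin.snoc z a) (Fin.lastCases (by simpa using ha) (by simpa using hz))
  simp only [Fin.sum_univ_castSucc, Fin.snoc_castSucc, Fin.snoc_last, hsum] at hpad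
  push_cast at hpad
  rw [show ((n : ℝ) * a + a) / (n + 1) = a by field_simp, le_div_iff₀ (by positivity)] at hpad
  rw [le_div_iff₀ hnR]
  linarith

theorem of_le (hI : Convex ℝ I) {n m : ℕ} (hn : 0 < n) (hnm : n ≤ m)
    (h : EqualWeightJensen I f m) : EqualWeightJensen I f n := by
  induction m, hnm using Nat.le_induction with
  | base => exact h
  | succ m hnm ih => exact ih (of_succ hI (hn.trans_le hnm) h)

end EqualWeightJensen

theorem MidpointConvexOn.equalWeightJensen {I : Set ℝ} {f : ℝ → ℝ} (hI : Convex ℝ I)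
    (hf : MidpointConvexOn I f) {n : ℕ} (hn : 0 < n) : EqualWeightJensen I f n :=
  (EqualWeightJensen.pow_two hI hf n).of_le hI hn Nat.lt_two_pow_self.le

theorem stmt_14_general (I : Set ℝ) (hconv : Convex ℝ I)
    (f : ℝ → ℝ)
    (hJ : ∀ u ∈ I, ∀ v ∈ I, f ((u + v) / 2) ≤ (f u + f v) / 2)
    (n : ℕ) (hn : 2 ≤ n) (x : Fin n → ℝ) (hx : ∀ i, x i ∈ I) :
    f ((∑ i, x i) / n) ≤ (1 / n) * ∑ i, f (((∑ j, x j) - x i) / ((n : ℝ) - 1)) := by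
  have hn1 : (n : ℝ) - 1 ≠ 0 := by
    have : (2 : ℝ) ≤ n := by exact_mod_cast hn
    linarith
  set y : Fin n → ℝ := fun i ↦ ((∑ j, x j) - x i) / ((n : ℝ) - 1)
  have hy : ∀ i, y i ∈ I := fun i ↦ by
    have hne : (univ.erase i).Nonempty := by
      rw [← card_pos, card_erase_of_mem (mem_univ i), card_univ, Fintype.card_fin]; omega
    simpa [sum_erase_eq_sub (mem_univ i), Nat.cast_sub (by omega : 1 ≤ n)] using
      hconv.sum_div_card_mem hne fun j _ ↦ hx j
  have hmean : ∑ i, y i = ∑ i, x i := by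
    simp only [y, ← sum_div, sum_sub_distrib, sum_const, card_univ, Fintype.card_fin, nsmul_eq_mul]
    field_simp
  have hjensen := MidpointConvexOn.equalWeightJensen hconv hJ (n := n) (by omega) y hy
  rw [hmean] at hjensen
  rwa [one_div, inv_mul_eq_div]

theorem stmt_14 (I : Set ℝ) (hne : I.Nonempty) (hop : IsOpen I) (hconv : Convex ℝ I)
    (f : ℝ → ℝ)
    (hJ : ∀ u ∈ I, ∀ v ∈ I, f ((u + v) / 2) ≤ (f u + f v) / 2)
    (n : ℕ) (hn : 2 ≤ n) (x : Fin n → ℝ) (hx : ∀ i, x i ∈ I) :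
    f ((∑ i, x i) / n) ≤ (1 / n) * ∑ i, f (((∑ j, x j) - x i) / ((n : ℝ) - 1)) :=
  stmt_14_general I hconv f hJ n hn x hx
end

section
/- Let λ₁, λ₂ ∈ [0,1] with λ₁+λ₂ = 1. Then λ₁ − λ₂ ≠ 0 (equivalently λ₁ ≠ 1/2) if and only if the 2×2 left circulant matrix [[λ₁,λ₂],[λ₂,λ₁]] is invertible. Moreover, if I ⊆ ℝ is a nonempty open interval, λ₁ ≠ λ₂, and f : I → ℝ satisfies f((x₁+x₂)/2) ≤ (1/2)(f(λ₁x₁+λ₂x₂) + f(λ₂x₁+λ₁x₂)) for all x₁, x₂ ∈ I, then f is Jensen convex on I. -/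
/-!
Put `d = λ₁ - λ₂`. Applying the hypothesis to `x₁, x₂ = m ± k` gives
`2 f(m) ≤ f(m - d k) + f(m + d k)`, i.e. the midpoint inequality at the radius `|d k|`. Near a
compact segment `[u, v] ⊆ I` this yields the midpoint inequality for all radii up to some `r > 0`.
The inequalities at radius `h/2` centred at `m - h/2`, `m` and `m + h/2` add up to the one at
radius `h` centred at `m`, so the admissible radius doubles, and after finitely many doublings it
reaches `(v - u)/2`.
-/

open Set Metric

def MidpointConvexWithin (s : Set ℝ) (r : ℝ) (f : ℝ → ℝ) : Prop :=
  ∀ m h, |h| ≤ r → m - h ∈ s → m + h ∈ s → 2 * f m ≤ f (m - h) + f (m + h)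

lemma Set.OrdConnected.add_mem_of_abs_le {s : Set ℝ} (hs : s.OrdConnected) {m h t : ℝ}
    (hl : m - h ∈ s) (hr : m + h ∈ s) (ht : |t| ≤ |h|) : m + t ∈ s := by
  refine hs.uIcc_subset hl hr (mem_uIcc.2 ?_)
  obtain ⟨ht₁, ht₂⟩ := abs_le.1 ht
  rcases le_total 0 h with h0 | h0
  · rw [abs_of_nonneg h0] at ht₁ ht₂
    exact Or.inl ⟨by linarith, by linarith⟩
  · rw [abs_of_nonpos h0] at ht₁ ht₂
    exact Or.inr ⟨by linarith, by linarith⟩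

namespace MidpointConvexWithin

variable {s : Set ℝ} {r : ℝ} {f : ℝ → ℝ}

lemma two_mul (hs : s.OrdConnected) (hf : MidpointConvexWithin s r f) :
    MidpointConvexWithin s (2 * r) f := by
  intro m h hh hl hr
  have hh₂ : |h / 2| ≤ r := by rw [abs_div, abs_two]; linarith
  have hh₂' : |h / 2| ≤ |h| := by rw [abs_div, abs_two]; linarith [abs_nonneg h]
  have hm : m ∈ s := by simpa using hs.add_mem_of_abs_le hl hr (t := 0) (by simp)
  have hm_sub : m - h / 2 ∈ s := by
    simpa [sub_eq_add_neg] using hs.add_mem_of_abs_le hl hr (t := -(h / 2)) (by rwa [abs_neg])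
  have hm_add : m + h / 2 ∈ s := hs.add_mem_of_abs_le hl hr hh₂'
  have hc := hf m (h / 2) hh₂ hm_sub hm_add
  have hl' := hf (m - h / 2) (h / 2) hh₂ (by rwa [sub_sub, add_halves]) (by rwa [sub_add_cancel])
  have hr' := hf (m + h / 2) (h / 2) hh₂ (by rwa [add_sub_cancel_right])
    (by rwa [add_assoc, add_halves])
  rw [sub_sub, add_halves, sub_add_cancel] at hl'
  rw [add_sub_cancel_right, add_assoc, add_halves] at hr'
  linarith

lemma two_pow_mul (hs : s.OrdConnected) (hf : MidpointConvexWithin s r f) (n : ℕ) :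
    MidpointConvexWithin s (2 ^ n * r) f := by
  induction n with
  | zero => simpa using hf
  | succ n ih => simpa [pow_succ, mul_comm, mul_left_comm] using ih.two_mul hs

lemma midpoint_le (hs : s.OrdConnected) (hr : 0 < r) (hf : MidpointConvexWithin s r f)
    {m h : ℝ} (hl : m - h ∈ s) (hr' : m + h ∈ s) : 2 * f m ≤ f (m - h) + f (m + h) := by
  obtain ⟨n, hn⟩ := pow_unbounded_of_one_lt (|h| / r) one_lt_two
  exact hf.two_pow_mul hs n m h ((div_lt_iff₀ hr).1 hn).le hl hr'

end MidpointConvexWithin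

lemma midpoint_le_of_scaled_midpoint_le {I : Set ℝ} (hI : IsOpen I) (hI' : I.OrdConnected)
    {f : ℝ → ℝ} {d : ℝ} (hd : d ≠ 0)
    (H : ∀ m k, m - k ∈ I → m + k ∈ I → 2 * f m ≤ f (m - d * k) + f (m + d * k))
    {u v : ℝ} (hu : u ∈ I) (hv : v ∈ I) : 2 * f ((u + v) / 2) ≤ f u + f v := by
  obtain ⟨δ, hδ, hδI⟩ := isCompact_uIcc.exists_cthickening_subset_open hI (hI'.uIcc_subset hu hv)
  have hd' : 0 < |d| := abs_pos.2 hd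
  have hf : MidpointConvexWithin (uIcc u v) (δ * |d|) f := by
    intro m h hh hl hr
    have hm : m ∈ uIcc u v := by
      simpa using ordConnected_uIcc.add_mem_of_abs_le hl hr (t := 0) (by simp)
    have hk : dist (m + h / d) m ≤ δ := by
      rwa [Real.dist_eq, add_sub_cancel_left, abs_div, div_le_iff₀ hd']
    have hk' : dist (m - h / d) m ≤ δ := by
      rwa [Real.dist_eq, sub_sub_cancel_left, abs_neg, abs_div, div_le_iff₀ hd']
    have := H m (h / d) (hδI (mem_cthickening_of_dist_le _ _ _ _ hm hk'))
      (hδI (mem_cthickening_of_dist_le _ _ _ _ hm hk))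
    rwa [mul_div_cancel₀ h hd] at this
  have := hf.midpoint_le ordConnected_uIcc (by positivity) (m := (u + v) / 2) (h := (v - u) / 2)
    (by rw [show (u + v) / 2 - (v - u) / 2 = u by ring]; exact left_mem_uIcc)
    (by rw [show (u + v) / 2 + (v - u) / 2 = v by ring]; exact right_mem_uIcc)
  rwa [show (u + v) / 2 - (v - u) / 2 = u by ring, show (u + v) / 2 + (v - u) / 2 = v by ring]
    at this

theorem stmt_15_general (l1 l2 : ℝ) (hsum : l1 + l2 = 1) :
    (l1 - l2 ≠ 0 ↔ IsUnit (Matrix.of ![![l1, l2], ![l2, l1]])) ∧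
    (∀ (I : Set ℝ), I.Nonempty → IsOpen I → Convex ℝ I → ∀ f : ℝ → ℝ,
      l1 ≠ l2 →
      (∀ x1 ∈ I, ∀ x2 ∈ I, f ((x1 + x2) / 2) ≤
        (1 / 2) * (f (l1 * x1 + l2 * x2) + f (l2 * x1 + l1 * x2))) →
      ∀ u ∈ I, ∀ v ∈ I, f ((u + v) / 2) ≤ (f u + f v) / 2) := by
  constructor
  · have hdet : l1 * l1 - l2 * l2 = l1 - l2 := by linear_combination (l1 - l2) * hsum
    rw [Matrix.isUnit_iff_isUnit_det, Matrix.det_fin_two_of, isUnit_iff_ne_zero, hdet]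
  · intro I _ hI hconv f hl hf u hu v hv
    have H : ∀ m k, m - k ∈ I → m + k ∈ I →
        2 * f m ≤ f (m - (l1 - l2) * k) + f (m + (l1 - l2) * k) := by
      intro m k hl hr
      have := hf (m + k) hr (m - k) hl
      rw [show (m + k + (m - k)) / 2 = m by ring,
        show l1 * (m + k) + l2 * (m - k) = m + (l1 - l2) * k by linear_combination m * hsum,
        show l2 * (m + k) + l1 * (m - k) = m - (l1 - l2) * k by linear_combination m * hsum]
        at this
      linarith
    linarith [midpoint_le_of_scaled_midpoint_le hI hconv.ordConnected (sub_ne_zero.2 hl) H hu hv]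

theorem stmt_15 (l1 l2 : ℝ) (h1 : l1 ∈ Set.Icc (0:ℝ) 1) (h2 : l2 ∈ Set.Icc (0:ℝ) 1)
    (hsum : l1 + l2 = 1) :
    (l1 - l2 ≠ 0 ↔ IsUnit (Matrix.of ![![l1, l2], ![l2, l1]])) ∧
    (∀ (I : Set ℝ), I.Nonempty → IsOpen I → Convex ℝ I → ∀ f : ℝ → ℝ,
      l1 ≠ l2 →
      (∀ x1 ∈ I, ∀ x2 ∈ I, f ((x1 + x2) / 2) ≤
        (1 / 2) * (f (l1 * x1 + l2 * x2) + f (l2 * x1 + l1 * x2))) →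
      ∀ u ∈ I, ∀ v ∈ I, f ((u + v) / 2) ≤ (f u + f v) / 2) :=
  stmt_15_general l1 l2 hsum
end

section
/- Let I ⊆ ℝ be a nonempty open interval, f : I → ℝ, and λ₁,…,λ₄ ∈ [0,1] with λ₁+λ₂+λ₃+λ₄ = 1, not all equal to 1/4. Let P be the 4×4 left circulant matrix with first row (λ₁,λ₂,λ₃,λ₄) and each subsequent row the left cyclic shift of the previous one. If f((x₁+x₂+x₃+x₄)/4) ≤ (1/4)∑_{j=0}^{3} f(λ_{1⊕j}x₁+λ_{2⊕j}x₂+λ_{3⊕j}x₃+λ_{4⊕j}x₄) holds for all x₁,…,x₄ ∈ I, then f is Jensen convex on I. -/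
/-!
The circulant matrix `P` acts on `ℝ⁴` with eigenvalue `1` on constants, `μ = λ₁ - λ₂ + λ₃ - λ₄`
on `(1, -1, 1, -1)`, and as a rotation scaled by `√ρ`, `ρ = (λ₁ - λ₃)² + (λ₂ - λ₄)²`, on
`span {(1, 0, -1, 0), (0, 1, 0, -1)}`; unless all `λᵢ = 1/4`, `μ ≠ 0` or `ρ ≠ 0`.
Accordingly, around `m = (x + y) / 2` there are four points with mean `m` that `P` maps to
`(y, x, y, x)`, resp. `(y, m, x, m)`, and the hypothesis gives `f m ≤ (f x + f y) / 2` as soon as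
a ball around `m` of radius proportional to `|y - x|` lies in `I`. On a segment `[u, v] ⊆ I` this is
Jensen's inequality for nearby points, and midpoint convexity for pairs at distance `≤ δ`
propagates to distance `≤ 2δ` through the quarter points of `[x, y]`.
-/

open Metric Set

lemma Real.midpoint_eq_add_div_two (x y : ℝ) : midpoint ℝ x y = (x + y) / 2 := by
  rw [midpoint_eq_smul_add, smul_eq_mul, invOf_eq_inv]
  ring

section Globalization

variable {E : Type*} [NormedAddCommGroup E] [NormedSpace ℝ E] {S : Set E} {f : E → ℝ}

lemma midpoint_midpoint_midpoint_same (x y : E) :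
    midpoint ℝ (midpoint ℝ x (midpoint ℝ x y)) (midpoint ℝ (midpoint ℝ x y) y) =
      midpoint ℝ x y := by
  simp only [midpoint_eq_smul_add, invOf_eq_inv]
  module

theorem Convex.midpoint_le_of_forall_dist_le (hS : Convex ℝ S) {δ : ℝ} (hδ : 0 < δ)
    (hloc : ∀ x ∈ S, ∀ y ∈ S, dist x y ≤ δ → f (midpoint ℝ x y) ≤ (f x + f y) / 2) :
    ∀ x ∈ S, ∀ y ∈ S, f (midpoint ℝ x y) ≤ (f x + f y) / 2 := by
  have doubling : ∀ n : ℕ, ∀ x ∈ S, ∀ y ∈ S, dist x y ≤ 2 ^ n * δ →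
      f (midpoint ℝ x y) ≤ (f x + f y) / 2 := by
    intro n
    induction n with
    | zero => simpa using hloc
    | succ n ih =>
      intro x hx y hy hxy
      set m := midpoint ℝ x y
      have hm : m ∈ S := hS.midpoint_mem hx hy
      have hhalf : dist x y / 2 ≤ 2 ^ n * δ := by rw [pow_succ] at hxy; linarith
      have hxm : dist x m = dist x y / 2 := by simp [m, dist_left_midpoint, div_eq_inv_mul]
      have hmy : dist m y = dist x y / 2 := by
        simp [m, dist_right_midpoint, div_eq_inv_mul, dist_comm]
      have left := ih x hx m hm (hxm ▸ hhalf)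
      have right := ih m hm y hy (hmy ▸ hhalf)
      have center := ih _ (hS.midpoint_mem hx hm) _ (hS.midpoint_mem hm hy)
        ((dist_midpoint_midpoint_le' x m m y).trans (by simp [hxm, hmy]; linarith))
      rw [midpoint_midpoint_midpoint_same] at center
      linarith
  intro x hx y hy
  obtain ⟨n, hn⟩ := pow_unbounded_of_one_lt (dist x y / δ) one_lt_two
  exact doubling n x hx y hy ((div_lt_iff₀ hδ).mp hn).le

end Globalization

def LocallyMidpointConvex (I : Set ℝ) (f : ℝ → ℝ) : Prop :=
  ∃ R ≥ 0, ∀ x y, closedBall ((x + y) / 2) (R * |y - x|) ⊆ I → f ((x + y) / 2) ≤ (f x + f y) / 2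

theorem LocallyMidpointConvex.midpoint_le {I : Set ℝ} {f : ℝ → ℝ} (hf : LocallyMidpointConvex I f)
    (hop : IsOpen I) (hconv : Convex ℝ I) :
    ∀ u ∈ I, ∀ v ∈ I, f ((u + v) / 2) ≤ (f u + f v) / 2 := by
  obtain ⟨R, hR, hlocal⟩ := hf
  intro u hu v hv
  obtain ⟨ε, hε, hthick⟩ := isCompact_uIcc.exists_cthickening_subset_open hop
    (hconv.ordConnected.uIcc_subset hu hv)
  have hjensen := (convex_uIcc u v).midpoint_le_of_forall_dist_le (f := f)
    (div_pos hε (by linarith : 0 < R + 1)) ?_ u left_mem_uIcc v right_mem_uIcc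
  · rwa [Real.midpoint_eq_add_div_two] at hjensen
  intro x hx y hy hxy
  rw [Real.midpoint_eq_add_div_two]
  refine hlocal x y (Subset.trans ?_ hthick)
  have hR_le : R * |y - x| ≤ ε := calc
    R * |y - x| ≤ (R + 1) * dist x y := by
      rw [Real.dist_eq, abs_sub_comm]
      nlinarith [abs_nonneg (x - y)]
    _ ≤ ε := (le_div_iff₀' (by linarith)).mp hxy
  calc closedBall ((x + y) / 2) (R * |y - x|) ⊆ closedBall ((x + y) / 2) ε :=
        closedBall_subset_closedBall hR_le
    _ ⊆ cthickening ε (uIcc u v) := by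
        rw [← Real.midpoint_eq_add_div_two]
        exact closedBall_subset_cthickening ((convex_uIcc u v).midpoint_mem hx hy) ε

def CirculantJensenIneq (I : Set ℝ) (f : ℝ → ℝ) (l1 l2 l3 l4 : ℝ) : Prop :=
  ∀ x1 ∈ I, ∀ x2 ∈ I, ∀ x3 ∈ I, ∀ x4 ∈ I,
    f ((x1 + x2 + x3 + x4) / 4) ≤
      (1 / 4) * (f (l1 * x1 + l2 * x2 + l3 * x3 + l4 * x4)
        + f (l2 * x1 + l3 * x2 + l4 * x3 + l1 * x4)
        + f (l3 * x1 + l4 * x2 + l1 * x3 + l2 * x4)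
        + f (l4 * x1 + l1 * x2 + l2 * x3 + l3 * x4))

lemma add_mul_mem_closedBall {m s d R : ℝ} (hs : |s| ≤ R) : m + s * d ∈ closedBall m (R * |d|) := by
  rw [mem_closedBall, Real.dist_eq, add_sub_cancel_left, abs_mul]
  gcongr

namespace CirculantJensenIneq

variable {I : Set ℝ} {f : ℝ → ℝ} {l1 l2 l3 l4 : ℝ}

lemma le_of_shifts (h : CirculantJensenIneq I f l1 l2 l3 l4) (hsum : l1 + l2 + l3 + l4 = 1)
    {m d s1 s2 s3 s4 : ℝ} (hs : s1 + s2 + s3 + s4 = 0)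
    (h1 : m + s1 * d ∈ I) (h2 : m + s2 * d ∈ I) (h3 : m + s3 * d ∈ I) (h4 : m + s4 * d ∈ I) :
    f m ≤ (1 / 4) * (f (m + (l1 * s1 + l2 * s2 + l3 * s3 + l4 * s4) * d)
        + f (m + (l2 * s1 + l3 * s2 + l4 * s3 + l1 * s4) * d)
        + f (m + (l3 * s1 + l4 * s2 + l1 * s3 + l2 * s4) * d)
        + f (m + (l4 * s1 + l1 * s2 + l2 * s3 + l3 * s4) * d)) := by
  have shift : ∀ a1 a2 a3 a4 : ℝ, a1 + a2 + a3 + a4 = 1 →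
      a1 * (m + s1 * d) + a2 * (m + s2 * d) + a3 * (m + s3 * d) + a4 * (m + s4 * d)
        = m + (a1 * s1 + a2 * s2 + a3 * s3 + a4 * s4) * d := fun a1 a2 a3 a4 ha => by
    linear_combination m * ha
  have mean : (m + s1 * d + (m + s2 * d) + (m + s3 * d) + (m + s4 * d)) / 4 = m := by
    linear_combination d / 4 * hs
  have key := h _ h1 _ h2 _ h3 _ h4
  rwa [mean, shift l1 l2 l3 l4 hsum, shift l2 l3 l4 l1 (by linarith),
    shift l3 l4 l1 l2 (by linarith), shift l4 l1 l2 l3 (by linarith)] at key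

lemma locallyMidpointConvex_of_alternating (h : CirculantJensenIneq I f l1 l2 l3 l4)
    (hsum : l1 + l2 + l3 + l4 = 1) (hμ : l1 - l2 + l3 - l4 ≠ 0) :
    LocallyMidpointConvex I f := by
  set b := (2 * (l1 - l2 + l3 - l4))⁻¹
  refine ⟨|b|, abs_nonneg b, fun x y hball => ?_⟩
  have hp : (x + y) / 2 + b * (y - x) ∈ I := hball (add_mul_mem_closedBall le_rfl)
  have hn : (x + y) / 2 + -b * (y - x) ∈ I := hball (add_mul_mem_closedBall (abs_neg b).le)
  have hb : (l1 - l2 + l3 - l4) * b = 1 / 2 := by simp only [b]; field_simp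
  have key := h.le_of_shifts hsum (by ring) hp hn hp hn
  rw [show l1 * b + l2 * -b + l3 * b + l4 * -b = 1 / 2 by linear_combination hb,
    show l2 * b + l3 * -b + l4 * b + l1 * -b = -1 / 2 by linear_combination -hb,
    show l3 * b + l4 * -b + l1 * b + l2 * -b = 1 / 2 by linear_combination hb,
    show l4 * b + l1 * -b + l2 * b + l3 * -b = -1 / 2 by linear_combination -hb,
    show (x + y) / 2 + 1 / 2 * (y - x) = y by ring,
    show (x + y) / 2 + -1 / 2 * (y - x) = x by ring] at key
  linarith

lemma locallyMidpointConvex_of_rotation (h : CirculantJensenIneq I f l1 l2 l3 l4)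
    (hsum : l1 + l2 + l3 + l4 = 1) (hρ : (l1 - l3) ^ 2 + (l2 - l4) ^ 2 ≠ 0) :
    LocallyMidpointConvex I f := by
  set c := (2 * ((l1 - l3) ^ 2 + (l2 - l4) ^ 2))⁻¹
  set p := (l1 - l3) * c
  set q := (l2 - l4) * c
  refine ⟨|p| + |q|, by positivity, fun x y hball => ?_⟩
  have mem : ∀ s, |s| ≤ |p| + |q| → (x + y) / 2 + s * (y - x) ∈ I := fun s hs =>
    hball (add_mul_mem_closedBall hs)
  have hpq : (l1 - l3) * p + (l2 - l4) * q = 1 / 2 := by simp only [p, q, c]; field_simp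
  have key := h.le_of_shifts hsum (s1 := p) (s2 := q) (s3 := -p) (s4 := -q) (by ring)
    (mem p (by simp)) (mem q (by simp)) (mem (-p) (by simp)) (mem (-q) (by simp))
  rw [show l1 * p + l2 * q + l3 * -p + l4 * -q = 1 / 2 by linear_combination hpq,
    show l2 * p + l3 * q + l4 * -p + l1 * -q = 0 by simp only [p, q]; ring,
    show l3 * p + l4 * q + l1 * -p + l2 * -q = -1 / 2 by linear_combination -hpq,
    show l4 * p + l1 * q + l2 * -p + l3 * -q = 0 by simp only [p, q]; ring,
    show (x + y) / 2 + 1 / 2 * (y - x) = y by ring,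
    show (x + y) / 2 + -1 / 2 * (y - x) = x by ring, zero_mul, add_zero] at key
  linarith

lemma locallyMidpointConvex (h : CirculantJensenIneq I f l1 l2 l3 l4) (hsum : l1 + l2 + l3 + l4 = 1)
    (hnotall : ¬ (l1 = 1 / 4 ∧ l2 = 1 / 4 ∧ l3 = 1 / 4 ∧ l4 = 1 / 4)) :
    LocallyMidpointConvex I f := by
  by_cases hμ : l1 - l2 + l3 - l4 = 0
  · refine h.locallyMidpointConvex_of_rotation hsum fun hρ => hnotall ?_
    obtain ⟨h13, h24⟩ := (add_eq_zero_iff_of_nonneg (sq_nonneg _) (sq_nonneg _)).mp hρ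
    rw [sq_eq_zero_iff, sub_eq_zero] at h13 h24
    refine ⟨?_, ?_, ?_, ?_⟩ <;> linarith
  · exact h.locallyMidpointConvex_of_alternating hsum hμ

end CirculantJensenIneq

theorem stmt_19_general (I : Set ℝ) (hop : IsOpen I) (hconv : Convex ℝ I)
    (f : ℝ → ℝ) (l1 l2 l3 l4 : ℝ)
    (hsum : l1 + l2 + l3 + l4 = 1)
    (hnotall : ¬ (l1 = 1 / 4 ∧ l2 = 1 / 4 ∧ l3 = 1 / 4 ∧ l4 = 1 / 4))
    (hineq : ∀ x1 ∈ I, ∀ x2 ∈ I, ∀ x3 ∈ I, ∀ x4 ∈ I,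
      f ((x1 + x2 + x3 + x4) / 4) ≤
        (1 / 4) * (f (l1 * x1 + l2 * x2 + l3 * x3 + l4 * x4)
          + f (l2 * x1 + l3 * x2 + l4 * x3 + l1 * x4)
          + f (l3 * x1 + l4 * x2 + l1 * x3 + l2 * x4)
          + f (l4 * x1 + l1 * x2 + l2 * x3 + l3 * x4))) :
    ∀ u ∈ I, ∀ v ∈ I, f ((u + v) / 2) ≤ (f u + f v) / 2 := by
  exact (CirculantJensenIneq.locallyMidpointConvex hineq hsum hnotall).midpoint_le hop hconv

theorem stmt_19 (I : Set ℝ) (hne : I.Nonempty) (hop : IsOpen I) (hconv : Convex ℝ I)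
    (f : ℝ → ℝ) (l1 l2 l3 l4 : ℝ)
    (h1 : l1 ∈ Set.Icc (0:ℝ) 1) (h2 : l2 ∈ Set.Icc (0:ℝ) 1)
    (h3 : l3 ∈ Set.Icc (0:ℝ) 1) (h4 : l4 ∈ Set.Icc (0:ℝ) 1)
    (hsum : l1 + l2 + l3 + l4 = 1)
    (hnotall : ¬ (l1 = 1 / 4 ∧ l2 = 1 / 4 ∧ l3 = 1 / 4 ∧ l4 = 1 / 4))
    (hineq : ∀ x1 ∈ I, ∀ x2 ∈ I, ∀ x3 ∈ I, ∀ x4 ∈ I,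
      f ((x1 + x2 + x3 + x4) / 4) ≤
        (1 / 4) * (f (l1 * x1 + l2 * x2 + l3 * x3 + l4 * x4)
          + f (l2 * x1 + l3 * x2 + l4 * x3 + l1 * x4)
          + f (l3 * x1 + l4 * x2 + l1 * x3 + l2 * x4)
          + f (l4 * x1 + l1 * x2 + l2 * x3 + l3 * x4))) :
    ∀ u ∈ I, ∀ v ∈ I, f ((u + v) / 2) ≤ (f u + f v) / 2 :=
  stmt_19_general I hop hconv f l1 l2 l3 l4 hsum hnotall hineq
end
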